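/- arXiv:2301.05414 — 2 statements merged into one kernel-verified Lean document; each statement's English description precedes it below -/
import Mathlib

section
/- (Proposition: complete form J^{(2ν+1,2)}_ℓ, odd order m = 2ν+1.) Let ν ≥ 1, ℓ ≥ 0. Suppose given smooth totally symmetric tensor fields L_{(2N)i₁...i_r} for odd ranks r ∈ {1,3,…,2ν+1} and N = 0,…,ℓ, and L_{(2N−1)i₁...i_r} for even ranks r ∈ {2,4,…,2ν} and N = 1,…,ℓ, such that: (i) L_{(0)i₁...i_{2ν+1}} is a (2ν+1)-th order generalized Killing tensor, and for ℓ > 0 and N = 1,…,ℓ the tensors L_{(2N)i₁...i_{2ν+1}} = −(1/(2N)) L_{(2N−1)(i₁...i_{2ν}|i_{2ν+1})} are (2ν+1)-th order generalized Killing tensors; (ii) s₀ = L_{(2ℓ)a}Q^a is constant; (iii) for ℓ > 0 and N = 1,…,ℓ: (L_{(2N−2)c}Q^c)_{,i₁} = 2(2N−1) L_{(2N−1)i₁i₂} Q^{i₂} − 2N(2N−1) L_{(2N)i₁}; (iv) for N = 0,…,ℓ and even r ∈ {2,4,…,2ν}: L_{(2N)(i₁...i_{r−1}|i_r)} = (r+1)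 L_{(2N)i₁...i_r i_{r+1}} Q^{i_{r+1}} − (2N+1) L_{(2N+1)i₁...i_r}, the last term present only if N < ℓ; (v) for ν > 1, ℓ > 0, N = 1,…,ℓ and odd r ∈ {3,5,…,2ν−1}: L_{(2N−1)(i₁...i_{r−1}|i_r)} = (r+1) L_{(2N−1)i₁...i_r i_{r+1}} Q^{i_{r+1}} − 2N L_{(2N)i₁...i_r}. Then J = Σ_{odd r ≤ 2ν+1} Σ_{N=0}^{ℓ} t^{2N} L_{(2N)i₁...i_r} q̇^{i₁}⋯q̇^{i_r} + Σ_{even r ≤ 2ν} Σ_{N=1}^{ℓ} t^{2N−1} L_{(2N−1)i₁...i_r} q̇^{i₁}⋯q̇^{i_r} + s₀ t^{2ℓ+1}/(2ℓ+1) + Σ_{N=0}^{ℓ−1} (L_{(2N)c}Q^c) t^{2N+1}/(2N+1) is a first integral of q̈^a = −Γ^a_{bc}q̇^bq̇^c − Q^a. -/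
noncomputable section
open scoped BigOperators

/-- Points of the configuration space `ℝ^D`. -/
abbrev Vec (D : ℕ) := Fin D → ℝ

/-- Connection coefficients: `Conn D Γ` with `Γ q a b c = Γ^a_{bc}(q)`. -/
abbrev Conn (D : ℕ) := Vec D → Fin D → Fin D → Fin D → ℝ

/-- Totally covariant `r`-tensor fields on `ℝ^D`. -/
abbrev Tens (D r : ℕ) := Vec D → (Fin r → Fin D) → ℝ

/-- Partial derivative `∂f/∂q^j`. -/
def pd {D : ℕ} (j : Fin D) (f : Vec D → ℝ) (q : Vec D) : ℝ :=
  fderiv ℝ f q (Pi.single j 1)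

/-- Covariant derivative `T_{i₁...i_r|j}` (the last slot is the derivative index `j`):
`T_{i₁...i_r|j} = ∂T_{i₁...i_r}/∂q^j − Σ_k Γ^s_{i_k j} T_{i₁...s...i_r}`. -/
def covTens {D r : ℕ} (Γ : Conn D) (T : Tens D r) : Tens D (r + 1) :=
  fun q idx =>
    pd (idx (Fin.last r)) (fun p => T p fun k => idx k.castSucc) q
      - ∑ k : Fin r, ∑ s : Fin D,
          Γ q s (idx k.castSucc) (idx (Fin.last r)) *
            T q (Function.update (fun l => idx l.castSucc) k s)

/-- Symmetrization of a tensor over all of its indices. -/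
def symT {D r : ℕ} (T : Tens D r) : Tens D r :=
  fun q idx => (r.factorial : ℝ)⁻¹ * ∑ σ : Equiv.Perm (Fin r), T q (idx ∘ σ)

/-- Totally symmetric tensor field. -/
def IsSymTens {D r : ℕ} (T : Tens D r) : Prop :=
  ∀ (q : Vec D) (idx : Fin r → Fin D) (σ : Equiv.Perm (Fin r)), T q (idx ∘ σ) = T q idx

/-- Smooth tensor field. -/
def SmoothTens {D r : ℕ} (T : Tens D r) : Prop :=
  ∀ idx : Fin r → Fin D, ContDiff ℝ (⊤ : ℕ∞) fun q => T q idx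

/-- Generalized Killing tensor of order `r` for the connection `Γ`:
`T_{(i₁...i_r|i_{r+1})} = 0`. -/
def IsGenKT {D r : ℕ} (Γ : Conn D) (T : Tens D r) : Prop :=
  ∀ q idx, symT (covTens Γ T) q idx = 0

/-- `q, v` solve `q̈^a = -Γ^a_{bc}(q) q̇^b q̇^c - Q^a(q)` on the set `s ⊆ ℝ`. -/
def IsSolutionOn {D : ℕ} (Γ : Conn D) (Q : Vec D → Fin D → ℝ)
    (s : Set ℝ) (q v : ℝ → Vec D) : Prop :=
  ∀ t ∈ s, ∀ a : Fin D,
    HasDerivAt (fun τ => q τ a) (v t a) t ∧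
    HasDerivAt (fun τ => v τ a)
      (-(∑ b, ∑ c, Γ (q t) a b c * v t b * v t c) - Q (q t) a) t

/-- `I(t,q,q̇)` is a first integral of the system: it is constant along every
(C²) solution defined on an open interval. -/
def FirstIntegral {D : ℕ} (Γ : Conn D) (Q : Vec D → Fin D → ℝ)
    (I : ℝ → Vec D → Vec D → ℝ) : Prop :=
  ∀ (a b : ℝ) (q v : ℝ → Vec D), IsSolutionOn Γ Q (Set.Ioo a b) q v →
    ∀ t₁ ∈ Set.Ioo a b, ∀ t₂ ∈ Set.Ioo a b,
      I t₁ (q t₁) (v t₁) = I t₂ (q t₂) (v t₂)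

/-- The contraction `L_c Q^c` of a rank-1 tensor with the generalized forces. -/
def dotQ {D : ℕ} (L : Tens D 1) (Q : Vec D → Fin D → ℝ) (q : Vec D) : ℝ :=
  ∑ c, L q (fun _ => c) * Q q c

/-!
Complete the family by `K_{(N)i₁…i_r} = L_{(N)i₁…i_r}` for `r ≥ 1` and by the scalars
`K_{(N+1)} = L_{(N)c}Q^c / (N + 1)`, so that `J = ∑_{N,r} t^N K_{(N)i₁…i_r} q̇^{i₁}⋯q̇^{i_r}`.
Along a solution, the time derivative of `K_{i₁…i_r} q̇^{i₁}⋯q̇^{i_r}` is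
`K_{(i₁…i_r|i_{r+1})} q̇^{i₁}⋯q̇^{i_{r+1}} − r K_{i₁…i_{r−1}c}Q^c q̇^{i₁}⋯q̇^{i_{r−1}}`,
and the hypotheses (i)–(v) say, uniformly in `N` and `r ≥ 0`, that
`K_{(N)(i₁…i_r|i_{r+1})} = (r+2) K_{(N)i₁…i_{r+1}c}Q^c − (N+1) K_{(N+1)i₁…i_{r+1}}`.
After substitution, the `Q`-terms telescope in the rank in steps of two down to
`−t^N K_{(N)c}Q^c = −(N+1) t^N K_{(N+1)}`, and the remaining terms telescope along the diagonal
`(N, r) ↦ (N+1, r+1)` against the derivatives of the powers `t^N`, leaving exactly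
`∑_N (N+1) t^N K_{(N+1)}`.
-/

theorem Finset.sum_range_two_mul {M : Type*} [AddCommMonoid M] (f : ℕ → M) (m : ℕ) :
    ∑ i ∈ Finset.range (2 * m), f i = ∑ i ∈ Finset.range m, (f (2 * i) + f (2 * i + 1)) := by
  induction m with
  | zero => simp
  | succ m ih =>
    rw [mul_add, mul_one, Finset.sum_range_succ, Finset.sum_range_succ, ih, Finset.sum_range_succ,
      add_assoc]

theorem Fin.sum_fun_snoc {α M : Type*} [Fintype α] [AddCommMonoid M] {r : ℕ}
    (F : (Fin (r + 1) → α) → M) : ∑ x, F x = ∑ x : Fin r → α, ∑ a, F (Fin.snoc x a) := by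
  rw [← (Fin.snocEquiv fun _ => α).sum_comp, Fintype.sum_prod_type, Finset.sum_comm]
  rfl

theorem Fin.prod_erase_eq_prod_succAbove {M : Type*} [CommMonoid M] {r : ℕ}
    (f : Fin (r + 1) → M) (k : Fin (r + 1)) :
    ∏ l ∈ Finset.univ.erase k, f l = ∏ i, f (k.succAbove i) := by
  rw [Fin.univ_succAbove r k, Finset.erase_cons, Finset.prod_map]
  rfl

theorem DifferentiableAt.hasDerivAt_comp_sum_pd {D : ℕ} {f : Vec D → ℝ} {q : ℝ → Vec D}
    {w : Vec D} {t : ℝ} (hf : DifferentiableAt ℝ f (q t))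
    (hq : ∀ a, HasDerivAt (fun τ => q τ a) (w a) t) :
    HasDerivAt (fun τ => f (q τ)) (∑ i, pd i f (q t) * w i) t := by
  refine (hf.hasFDerivAt.comp_hasDerivAt t (hasDerivAt_pi.2 hq)).congr_deriv ?_
  conv_lhs => rw [← Finset.univ_sum_single w]
  simp only [map_sum, pd]
  refine Finset.sum_congr rfl fun i _ => ?_
  conv_lhs => rw [← mul_one (w i), ← smul_eq_mul, Pi.single_smul', map_smul, smul_eq_mul]
  exact mul_comm _ _

theorem pd_const {D : ℕ} (i : Fin D) (c : ℝ) (q : Vec D) : pd i (fun _ => c) q = 0 := by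
  simp [pd]

theorem pd_div_const {D : ℕ} (i : Fin D) (f : Vec D → ℝ) (c : ℝ) (q : Vec D) :
    pd i (fun p => f p / c) q = pd i f q / c := by
  have h : (fun p => f p / c) = c⁻¹ • f := funext fun p => by simp [div_eq_inv_mul]
  rw [pd, h, fderiv_const_smul_field]
  simp [pd, div_eq_inv_mul]

theorem symT_rank_one {D : ℕ} (T : Tens D 1) : symT T = T := by
  ext q idx
  simp [symT]

theorem covTens_rank_zero {D : ℕ} (Γ : Conn D) (T : Tens D 0) (q : Vec D)
    (idx : Fin 1 → Fin D) : covTens Γ T q idx = pd (idx 0) (fun p => T p Fin.elim0) q := by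
  simp [covTens, Subsingleton.elim _ (Fin.elim0 : Fin 0 → Fin D)]

theorem symT_covTens_zero {D r : ℕ} (Γ : Conn D) :
    symT (covTens Γ (fun _ _ => 0 : Tens D r)) = fun _ _ => 0 := by
  ext q idx
  simp [symT, covTens, pd_const]

theorem isSymTens_rank_zero {D : ℕ} (T : Tens D 0) : IsSymTens T := fun q idx _ => by
  rw [Subsingleton.elim (idx ∘ _) idx]

theorem IsSymTens.apply_insertNth {D r : ℕ} {T : Tens D (r + 1)} (hT : IsSymTens T) (q : Vec D)
    (k : Fin (r + 1)) (m : Fin D) (idx : Fin r → Fin D) :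
    T q (k.insertNth m idx) = T q (Fin.snoc idx m) := by
  have hcons : ∀ k : Fin (r + 1), T q (k.insertNth m idx) = T q (Fin.cons m idx) := fun k => by
    rw [← Fin.cons_comp_cycleRange, hT]
  rw [hcons, ← Fin.insertNth_last', hcons]

theorem dotQ_zero {D : ℕ} (Q : Vec D → Fin D → ℝ) : dotQ (fun _ _ => 0) Q = fun _ => 0 := by
  ext q
  simp [dotQ]

theorem contDiff_dotQ {D : ℕ} {L : Tens D 1} {Q : Vec D → Fin D → ℝ} (hL : SmoothTens L)
    (hQ : ∀ a, ContDiff ℝ (⊤ : ℕ∞) fun q => Q q a) : ContDiff ℝ (⊤ : ℕ∞) (dotQ L Q) :=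
  ContDiff.sum fun c _ => (hL fun _ => c).mul (hQ c)

theorem sum_chain_derivative_eq_zero (t : ℝ) (n R : ℕ) (E F : ℕ → ℕ → ℝ)
    (hE : ∀ N r, n ≤ N ∨ R ≤ r → E N r = 0) (hF : ∀ N r, R ≤ r → F N r = 0)
    (hF0 : ∀ N, F N 0 = 0) (hF1 : ∀ N, F N 1 = (N + 1) * E (N + 1) 0) :
    ∑ N ∈ Finset.range n, ∑ r ∈ Finset.range R,
      ((N : ℝ) * t ^ (N - 1) * E N r
        + t ^ N * (F N (r + 2) - (N + 1) * E (N + 1) (r + 1) - F N r)) = 0 := by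
  set S : ℕ → ℝ := fun N => ∑ r ∈ Finset.range R, E N r with hS
  have hshift : ∀ N, ∑ r ∈ Finset.range R, E N (r + 1) = S N - E N 0 := fun N => by
    have h := Finset.sum_range_succ' (E N) R
    rw [Finset.sum_range_succ, hE N R (Or.inr le_rfl), add_zero] at h
    linarith
  -- `F N (r + 2) - F N r` telescopes in steps of two
  have htele : ∀ N, ∑ r ∈ Finset.range R, (F N (r + 2) - F N r) = -F N 1 := fun N => by
    have h := Finset.sum_range_sub (fun r => F N r + F N (r + 1)) R
    simp only [hF N R le_rfl, hF N (R + 1) (Nat.le_succ R), hF0, add_zero, zero_add] at h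
    rw [neg_eq_zero_sub, ← h]
    exact Finset.sum_congr rfl fun r _ => by ring
  have hinner : ∀ N : ℕ, ∑ r ∈ Finset.range R,
      ((N : ℝ) * t ^ (N - 1) * E N r
        + t ^ N * (F N (r + 2) - (N + 1) * E (N + 1) (r + 1) - F N r))
      = N * t ^ (N - 1) * S N - ((N + 1 : ℕ) : ℝ) * t ^ (N + 1 - 1) * S (N + 1) := fun N => by
    rw [Finset.sum_congr rfl fun r _ => show (N : ℝ) * t ^ (N - 1) * E N r
        + t ^ N * (F N (r + 2) - (N + 1) * E (N + 1) (r + 1) - F N r)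
        = N * t ^ (N - 1) * E N r + t ^ N * (F N (r + 2) - F N r)
          - t ^ N * (N + 1) * E (N + 1) (r + 1) by ring,
      Finset.sum_sub_distrib, Finset.sum_add_distrib, ← Finset.mul_sum, ← Finset.mul_sum,
      ← Finset.mul_sum, htele, hshift, hF1, Nat.add_sub_cancel]
    push_cast
    ring
  rw [Finset.sum_congr rfl fun N _ => hinner N,
    Finset.sum_range_sub' (fun N => (N : ℝ) * t ^ (N - 1) * S N)]
  simp [hS, hE n _ (Or.inl le_rfl)]

namespace Tens

variable {D r : ℕ}

def formEval (T : Tens D r) (q v : Vec D) : ℝ :=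
  ∑ idx : Fin r → Fin D, T q idx * ∏ k, v (idx k)

def formDeriv (T : Tens D r) (q v w : Vec D) : ℝ :=
  ∑ idx : Fin r → Fin D, T q idx * ∑ k, (∏ l ∈ Finset.univ.erase k, v (idx l)) * w (idx k)

def contractLast (T : Tens D (r + 1)) (Q : Vec D → Fin D → ℝ) : Tens D r :=
  fun q idx => ∑ j, T q (Fin.snoc idx j) * Q q j

theorem formEval_zero (q v : Vec D) : formEval (fun _ _ => 0 : Tens D r) q v = 0 := by
  simp [formEval]

theorem formDeriv_zero (q v w : Vec D) : formDeriv (fun _ _ => 0 : Tens D r) q v w = 0 := by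
  simp [formDeriv]

theorem formEval_rank_zero (T : Tens D 0) (q v : Vec D) : formEval T q v = T q Fin.elim0 := by
  simp [formEval, Subsingleton.elim _ (Fin.elim0 : Fin 0 → Fin D)]

theorem sum_mul_prod_eq_sum_formEval {ι : Type*} (s : Finset ι) (c : ι → ℝ) (T : ι → Tens D r)
    (q v : Vec D) :
    ∑ idx : Fin r → Fin D, (∑ N ∈ s, c N * T N q idx) * ∏ k, v (idx k)
      = ∑ N ∈ s, c N * formEval (T N) q v := by
  simp only [formEval, Finset.sum_mul, Finset.mul_sum, mul_assoc]
  exact Finset.sum_comm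

theorem formEval_symT (T : Tens D r) (q v : Vec D) :
    formEval (symT T) q v = formEval T q v := by
  have hperm : ∀ σ : Equiv.Perm (Fin r),
      ∑ idx : Fin r → Fin D, T q (idx ∘ σ) * ∏ k, v (idx k) = formEval T q v := fun σ =>
    Fintype.sum_equiv (σ.symm.arrowCongr (Equiv.refl (Fin D))) _ _ fun idx => by
      simp only [Equiv.arrowCongr_apply, Equiv.symm_symm, Equiv.coe_refl, Function.id_comp]
      rw [← Equiv.prod_comp σ (fun k => v (idx k))]
      rfl
  have hfact : (r.factorial : ℝ) ≠ 0 := by positivity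
  simp only [formEval, symT, mul_assoc, Finset.sum_mul, ← Finset.mul_sum]
  rw [Finset.sum_comm, Finset.sum_congr rfl fun σ _ => hperm σ, Finset.sum_const,
    Finset.card_univ, Fintype.card_perm, Fintype.card_fin, nsmul_eq_mul, ← mul_assoc,
    inv_mul_cancel₀ hfact, one_mul, formEval]

theorem sum_connection_term (Γ : Conn D) (T : Tens D r) (q v : Vec D) (k : Fin r) :
    ∑ idx : Fin r → Fin D, ∑ s, ∑ j,
        Γ q s (idx k) j * T q (Function.update idx k s) * ((∏ l, v (idx l)) * v j)
      = ∑ idx : Fin r → Fin D, T q idx *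
          ((∏ l ∈ Finset.univ.erase k, v (idx l)) * ∑ b, ∑ c, Γ q (idx k) b c * v b * v c) := by
  -- the involution `(idx, s) ↦ (update idx k s, idx k)` moves `Γ` onto the velocities
  let σ : Equiv.Perm ((Fin r → Fin D) × Fin D) :=
    { toFun := fun p => (Function.update p.1 k p.2, p.1 k)
      invFun := fun p => (Function.update p.1 k p.2, p.1 k)
      left_inv := fun p => by simp [Function.update_idem]
      right_inv := fun p => by simp [Function.update_idem] }
  have hP : ∀ (idx : Fin r → Fin D) s, ∏ l ∈ Finset.univ.erase k, v (Function.update idx k s l)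
      = ∏ l ∈ Finset.univ.erase k, v (idx l) := fun idx s =>
    Finset.prod_congr rfl fun l hl => by rw [Function.update_of_ne (Finset.ne_of_mem_erase hl)]
  rw [← Fintype.sum_prod_type' (f := fun idx s => ∑ j,
      Γ q s (idx k) j * T q (Function.update idx k s) * ((∏ l, v (idx l)) * v j)),
    ← Equiv.sum_comp σ, Fintype.sum_prod_type]
  refine Finset.sum_congr rfl fun idx _ => ?_
  simp only [σ, Equiv.coe_fn_mk, Function.update_self, Function.update_idem,
    Function.update_eq_self, Finset.mul_sum]
  refine Finset.sum_congr rfl fun b _ => Finset.sum_congr rfl fun c _ => ?_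
  rw [← Finset.mul_prod_erase _ _ (Finset.mem_univ k), Function.update_self, hP]
  ring

theorem formEval_covTens (Γ : Conn D) (T : Tens D r) (q v : Vec D) :
    formEval (covTens Γ T) q v
      = ∑ idx : Fin r → Fin D, (∑ i, pd i (fun p => T p idx) q * v i) * ∏ k, v (idx k)
        - formDeriv T q v fun a => ∑ b, ∑ c, Γ q a b c * v b * v c := by
  have hcov : ∀ (idx : Fin r → Fin D) j, covTens Γ T q (Fin.snoc idx j)
      = pd j (fun p => T p idx) q
        - ∑ k, ∑ s, Γ q s (idx k) j * T q (Function.update idx k s) := by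
    intro idx j
    simp only [covTens, Fin.snoc_last, Fin.snoc_castSucc]
  have hprod : ∀ (idx : Fin r → Fin D) j,
      ∏ k, v (Fin.snoc idx j k : Fin D) = (∏ k, v (idx k)) * v j := by
    intro idx j
    simp [Fin.prod_univ_castSucc]
  simp only [formEval, formDeriv, Fin.sum_fun_snoc (fun idx => covTens Γ T q idx * ∏ k, v (idx k)),
    hcov, hprod, sub_mul, Finset.sum_sub_distrib]
  congr 1
  · refine Finset.sum_congr rfl fun idx _ => ?_
    rw [Finset.sum_mul]
    exact Finset.sum_congr rfl fun j _ => by ring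
  · symm
    rw [Finset.sum_congr rfl fun idx _ => Finset.mul_sum _ _ _, Finset.sum_comm,
      Finset.sum_congr rfl fun k _ => (sum_connection_term Γ T q v k).symm, Finset.sum_comm]
    simp only [Finset.sum_mul]
    refine Finset.sum_congr rfl fun idx _ => ?_
    exact (Finset.sum_congr rfl fun k _ => Finset.sum_comm).trans Finset.sum_comm

theorem formDeriv_eq_of_isSymTens {T : Tens D (r + 1)} (hT : IsSymTens T)
    (Q : Vec D → Fin D → ℝ) (q v : Vec D) :
    formDeriv T q v (Q q) = (r + 1) * formEval (contractLast T Q) q v := by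
  have hk : ∀ k : Fin (r + 1), ∑ idx : Fin (r + 1) → Fin D,
      T q idx * ((∏ l ∈ Finset.univ.erase k, v (idx l)) * Q q (idx k))
        = formEval (contractLast T Q) q v := fun k => by
    rw [← (Fin.insertNthEquiv (fun _ => Fin D) k).sum_comp, Fintype.sum_prod_type,
      Finset.sum_comm]
    refine Finset.sum_congr rfl fun idx _ => ?_
    simp only [contractLast, Finset.sum_mul, Fin.insertNthEquiv_apply,
      Fin.prod_erase_eq_prod_succAbove, Fin.insertNth_apply_succAbove, Fin.insertNth_apply_same]
    refine Finset.sum_congr rfl fun j _ => ?_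
    rw [show Fin.insertNthEquiv (fun _ => Fin D) k (j, idx) = k.insertNth j idx from rfl,
      hT.apply_insertNth]
    ring
  rw [formDeriv, Finset.sum_congr rfl fun idx _ => Finset.mul_sum _ _ _, Finset.sum_comm,
    Finset.sum_congr rfl fun k _ => hk k, Finset.sum_const, Finset.card_univ, Fintype.card_fin,
    nsmul_eq_mul]
  push_cast
  ring

theorem hasDerivAt_formEval {T : Tens D r} {q v : ℝ → Vec D} {w : Vec D} {t : ℝ}
    (hT : ∀ idx, DifferentiableAt ℝ (fun p => T p idx) (q t))
    (hq : ∀ a, HasDerivAt (fun τ => q τ a) (v t a) t)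
    (hv : ∀ a, HasDerivAt (fun τ => v τ a) (w a) t) :
    HasDerivAt (fun τ => formEval T (q τ) (v τ))
      ((∑ idx : Fin r → Fin D, (∑ i, pd i (fun p => T p idx) (q t) * v t i) * ∏ k, v t (idx k))
        + formDeriv T (q t) (v t) w) t := by
  rw [formDeriv, ← Finset.sum_add_distrib]
  refine HasDerivAt.fun_sum fun idx _ => ?_
  have hprod := HasDerivAt.fun_finsetProd (u := Finset.univ) (f := fun k τ => v τ (idx k))
    fun k _ => hv (idx k)
  refine (((hT idx).hasDerivAt_comp_sum_pd hq).mul hprod).congr_deriv ?_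
  simp only [smul_eq_mul]

theorem _root_.IsSolutionOn.hasDerivAt_formEval {Γ : Conn D} {Q : Vec D → Fin D → ℝ}
    {s : Set ℝ} {q v : ℝ → Vec D} (hsol : IsSolutionOn Γ Q s q v) {t : ℝ} (ht : t ∈ s)
    {T : Tens D r} (hT : ∀ idx, DifferentiableAt ℝ (fun p => T p idx) (q t)) :
    HasDerivAt (fun τ => formEval T (q τ) (v τ))
      (formEval (covTens Γ T) (q t) (v t) - formDeriv T (q t) (v t) (Q (q t))) t := by
  refine (Tens.hasDerivAt_formEval hT (fun a => (hsol t ht a).1) fun a =>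
    (hsol t ht a).2).congr_deriv ?_
  simp only [formEval_covTens, formDeriv, mul_sub, mul_neg, Finset.sum_sub_distrib,
    Finset.sum_neg_distrib]
  ring

theorem formEval_covTens_of_chain {Γ : Conn D} {Q : Vec D → Fin D → ℝ}
    {K : ℕ → (r : ℕ) → Tens D r} (hsym : ∀ N r, IsSymTens (K N r))
    (hcov : ∀ N r q idx, symT (covTens Γ (K N r)) q idx
      = (r + 2) * contractLast (K N (r + 2)) Q q idx - (N + 1) * K (N + 1) (r + 1) q idx)
    (N r : ℕ) (q v : Vec D) :
    formEval (covTens Γ (K N r)) q v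
      = formDeriv (K N (r + 2)) q v (Q q) - (N + 1) * formEval (K (N + 1) (r + 1)) q v := by
  rw [← formEval_symT, formDeriv_eq_of_isSymTens (hsym N (r + 2))]
  simp only [formEval, hcov, sub_mul, Finset.sum_sub_distrib, mul_assoc, ← Finset.mul_sum]
  push_cast
  ring

theorem firstIntegral_of_chain {n R : ℕ} (Γ : Conn D) (Q : Vec D → Fin D → ℝ)
    (K : ℕ → (r : ℕ) → Tens D r)
    (hdiff : ∀ N r idx, Differentiable ℝ fun q => K N r q idx)
    (hsym : ∀ N r, IsSymTens (K N r))
    (hsupp : ∀ N r, n ≤ N ∨ R ≤ r → K N r = fun _ _ => 0)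
    (hcov : ∀ N r q idx, symT (covTens Γ (K N r)) q idx
      = (r + 2) * contractLast (K N (r + 2)) Q q idx - (N + 1) * K (N + 1) (r + 1) q idx)
    (hpot : ∀ N q idx, contractLast (K N 1) Q q idx = (N + 1) * K (N + 1) 0 q idx) :
    FirstIntegral Γ Q fun t q v =>
      ∑ N ∈ Finset.range n, ∑ r ∈ Finset.range R, t ^ N * formEval (K N r) q v := by
  intro a b q v hsol t₁ ht₁ t₂ ht₂
  have hderiv : ∀ t ∈ Set.Ioo a b, HasDerivAt (fun τ => ∑ N ∈ Finset.range n,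
      ∑ r ∈ Finset.range R, τ ^ N * formEval (K N r) (q τ) (v τ)) 0 t := by
    intro t ht
    have hsum := HasDerivAt.fun_sum fun N (_ : N ∈ Finset.range n) =>
      HasDerivAt.fun_sum fun r (_ : r ∈ Finset.range R) =>
        (hasDerivAt_pow N t).mul (hsol.hasDerivAt_formEval ht fun idx => hdiff N r idx (q t))
    refine hsum.congr_deriv ?_
    simp only [formEval_covTens_of_chain hsym hcov]
    refine sum_chain_derivative_eq_zero t n R (fun N r => formEval (K N r) (q t) (v t))
      (fun N r => formDeriv (K N r) (q t) (v t) (Q (q t))) ?_ ?_ ?_ ?_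
    · intro N r h
      simp only [hsupp N r h, formEval_zero]
    · intro N r h
      simp only [hsupp N r (Or.inr h), formDeriv_zero]
    · intro N
      simp [formDeriv]
    · intro N
      simp [formDeriv_eq_of_isSymTens (hsym N 1), formEval_rank_zero, hpot]
  exact (isOpen_Ioo.is_const_of_deriv_eq_zero isPreconnected_Ioo
    (fun t ht => (hderiv t ht).differentiableAt.differentiableWithinAt)
    (fun t ht => (hderiv t ht).deriv) ht₁ ht₂)

end Tens

def withPotentials {D : ℕ} (L : ℕ → (r : ℕ) → Tens D r) (Q : Vec D → Fin D → ℝ) :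
    ℕ → (r : ℕ) → Tens D r
  | 0, 0 => fun _ _ => 0
  | N + 1, 0 => fun q _ => dotQ (L N 1) Q q / (N + 1)
  | N, r + 1 => L N (r + 1)

section withPotentials

variable {D : ℕ} {L : ℕ → (r : ℕ) → Tens D r} {Q : Vec D → Fin D → ℝ}

@[simp]
theorem withPotentials_succ (N r : ℕ) : withPotentials L Q N (r + 1) = L N (r + 1) := by
  cases N <;> rfl

@[simp]
theorem withPotentials_zero_zero : withPotentials L Q 0 0 = fun _ _ => 0 := rfl

@[simp]
theorem withPotentials_succ_zero (N : ℕ) :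
    withPotentials L Q (N + 1) 0 = fun q _ => dotQ (L N 1) Q q / (N + 1) := rfl

theorem differentiable_withPotentials (hLsm : ∀ N r, SmoothTens (L N r))
    (hQ : ∀ a, ContDiff ℝ (⊤ : ℕ∞) fun q => Q q a) (N r : ℕ) (idx : Fin r → Fin D) :
    Differentiable ℝ fun q => withPotentials L Q N r q idx := by
  rcases r with _ | r
  · rcases N with _ | N
    · exact differentiable_const 0
    · exact ((contDiff_dotQ (hLsm N 1) hQ).div_const _).differentiable (by simp)
  · simpa using (hLsm N (r + 1) idx).differentiable (by simp)

theorem isSymTens_withPotentials (hLsym : ∀ N r, IsSymTens (L N r)) (N r : ℕ) :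
    IsSymTens (withPotentials L Q N r) := by
  rcases r with _ | r
  · exact isSymTens_rank_zero _
  · simpa using hLsym N (r + 1)

theorem contractLast_withPotentials_one (N : ℕ) (q : Vec D) (idx : Fin 0 → Fin D) :
    Tens.contractLast (withPotentials L Q N 1) Q q idx
      = (N + 1) * withPotentials L Q (N + 1) 0 q idx := by
  have hsnoc : ∀ j, (Fin.snoc idx j : Fin 1 → Fin D) = fun _ => j := fun j => by
    ext k
    rw [Fin.fin_one_eq_zero k]
    rfl
  simp only [withPotentials_succ_zero, Tens.contractLast, withPotentials_succ, hsnoc, dotQ]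
  field_simp

theorem withPotentials_eq_zero {ν ℓ : ℕ}
    (hL0 : ∀ N r, r = 0 ∨ 2 * ν + 1 < r ∨ 2 * ℓ < N ∨ N % 2 = r % 2 → L N r = fun _ _ => 0)
    (N r : ℕ) (h : 2 * (ℓ + 1) ≤ N ∨ 2 * (ν + 1) ≤ r) :
    withPotentials L Q N r = fun _ _ => 0 := by
  rcases r with _ | r
  · obtain ⟨M, rfl⟩ : ∃ M, N = M + 1 := ⟨N - 1, by omega⟩
    simp [hL0 M 1 (by omega), dotQ_zero]
  · simpa using hL0 N (r + 1) (by omega)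

theorem symT_covTens_eq_chain_succ {ν ℓ : ℕ} {Γ : Conn D}
    (hL0 : ∀ N r, r = 0 ∨ 2 * ν + 1 < r ∨ 2 * ℓ < N ∨ N % 2 = r % 2 → L N r = fun _ _ => 0)
    (hKT0 : IsGenKT Γ (L 0 (2 * ν + 1)))
    (hrec : ∀ N, 1 ≤ N → N ≤ ℓ →
      (∀ q (idx : Fin (2 * ν + 1) → Fin D),
        L (2 * N) (2 * ν + 1) q idx =
          -(1 / (2 * (N : ℝ))) * symT (covTens Γ (L (2 * N - 1) (2 * ν))) q idx) ∧
      IsGenKT Γ (L (2 * N) (2 * ν + 1)))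
    (hc2 : ∀ N, N ≤ ℓ → ∀ i : ℕ, 2 * i + 2 ≤ 2 * ν →
      ∀ q (idx : Fin (2 * i + 2) → Fin D),
        symT (covTens Γ (L (2 * N) (2 * i + 1))) q idx =
          ((2 * i + 3 : ℕ) : ℝ) * (∑ j, L (2 * N) (2 * i + 3) q (Fin.snoc idx j) * Q q j)
            - (2 * (N : ℝ) + 1) * L (2 * N + 1) (2 * i + 2) q idx)
    (hc3 : ∀ N, 1 ≤ N → N ≤ ℓ → ∀ i : ℕ, 2 * i + 4 ≤ 2 * ν →
      ∀ q (idx : Fin (2 * i + 3) → Fin D),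
        symT (covTens Γ (L (2 * N - 1) (2 * i + 2))) q idx =
          ((2 * i + 4 : ℕ) : ℝ) * (∑ j, L (2 * N - 1) (2 * i + 4) q (Fin.snoc idx j) * Q q j)
            - 2 * (N : ℝ) * L (2 * N) (2 * i + 3) q idx)
    (N s : ℕ) (q : Vec D) (idx : Fin (s + 2) → Fin D) :
    symT (covTens Γ (L N (s + 1))) q idx
      = ((s : ℝ) + 3) * Tens.contractLast (L N (s + 3)) Q q idx
        - (N + 1) * L (N + 1) (s + 2) q idx := by
  have hzero : L N (s + 1) = (fun _ _ => 0) → L N (s + 3) = (fun _ _ => 0) →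
      L (N + 1) (s + 2) = (fun _ _ => 0) →
      symT (covTens Γ (L N (s + 1))) q idx
        = ((s : ℝ) + 3) * Tens.contractLast (L N (s + 3)) Q q idx
          - (N + 1) * L (N + 1) (s + 2) q idx := by
    intro h₁ h₃ h₂
    simp [h₁, h₂, h₃, symT_covTens_zero, Tens.contractLast]
  by_cases htriv : N % 2 = (s + 1) % 2 ∨ 2 * ℓ < N ∨ 2 * ν < s
  · exact hzero (hL0 _ _ (by omega)) (hL0 _ _ (by omega)) (hL0 _ _ (by omega))
  rcases Nat.even_or_odd' N with ⟨a, rfl | rfl⟩ <;> rcases Nat.even_or_odd' s with ⟨i, rfl | rfl⟩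
  · rcases Nat.lt_or_ge i ν with hi | hi
    · rw [hc2 a (by omega) i (by omega)]
      simp only [Tens.contractLast]
      push_cast
      ring
    · obtain rfl : i = ν := by omega
      have hKT : IsGenKT Γ (L (2 * a) (2 * i + 1)) := by
        rcases Nat.eq_zero_or_pos a with rfl | ha
        · exact hKT0
        · exact (hrec a ha (by omega)).2
      rw [hKT q idx, hL0 (2 * a) (2 * i + 3) (by omega), hL0 (2 * a + 1) (2 * i + 2) (by omega)]
      simp [Tens.contractLast]
  · omega
  · omega
  · rcases Nat.lt_or_ge (i + 1) ν with hi | hi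
    · have h := hc3 (a + 1) (by omega) (by omega) i (by omega) q idx
      rw [show 2 * (a + 1) - 1 = 2 * a + 1 by omega, show 2 * (a + 1) = 2 * a + 2 by ring] at h
      rw [h]
      simp only [Tens.contractLast]
      push_cast
      ring
    · obtain rfl : ν = i + 1 := by omega
      -- in top rank, `L_{(2a+2)}` is defined through the symmetrized covariant derivative
      have h := (hrec (a + 1) (by omega) (by omega)).1 q idx
      rw [show 2 * (a + 1) - 1 = 2 * a + 1 by omega, show 2 * (a + 1) = 2 * a + 2 by ring] at h
      rw [hL0 (2 * a + 1) (2 * i + 1 + 3) (by omega)]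
      simp only [Tens.contractLast, zero_mul, Finset.sum_const_zero]
      field_simp at h
      push_cast at h ⊢
      linear_combination h

theorem symT_covTens_withPotentials_zero {ν ℓ : ℕ} {s₀ : ℝ}
    (hL0 : ∀ N r, r = 0 ∨ 2 * ν + 1 < r ∨ 2 * ℓ < N ∨ N % 2 = r % 2 → L N r = fun _ _ => 0)
    (hs₀ : ∀ q, dotQ (L (2 * ℓ) 1) Q q = s₀)
    (hc1 : ∀ N, 1 ≤ N → N ≤ ℓ → ∀ q (i : Fin D),
      pd i (dotQ (L (2 * N - 2) 1) Q) q =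
        2 * (2 * (N : ℝ) - 1) * (∑ j, L (2 * N - 1) 2 q ![i, j] * Q q j)
          - 2 * (N : ℝ) * (2 * (N : ℝ) - 1) * L (2 * N) 1 q fun _ => i)
    (Γ : Conn D) (N : ℕ) (q : Vec D) (idx : Fin 1 → Fin D) :
    symT (covTens Γ (withPotentials L Q N 0)) q idx
      = 2 * Tens.contractLast (L N 2) Q q idx - (N + 1) * L (N + 1) 1 q idx := by
  have hidx : idx = fun _ => idx 0 := funext fun k => by rw [Fin.fin_one_eq_zero k]
  have hsnoc : ∀ j, (Fin.snoc idx j : Fin 2 → Fin D) = ![idx 0, j] := fun j => by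
    ext k
    fin_cases k <;> rfl
  rw [symT_rank_one, covTens_rank_zero]
  simp only [Tens.contractLast, hsnoc]
  rw [hidx]
  rcases N with _ | M
  · simp [pd_const, hL0 0 2 (by omega), hL0 1 1 (by omega)]
  simp only [withPotentials_succ_zero, pd_div_const]
  by_cases hM : M % 2 = 0 ∧ M < 2 * ℓ
  · obtain ⟨a, rfl⟩ : ∃ a, M = 2 * a := ⟨M / 2, by omega⟩
    have h := hc1 (a + 1) (by omega) (by omega) q (idx 0)
    rw [show 2 * (a + 1) - 2 = 2 * a by omega, show 2 * (a + 1) - 1 = 2 * a + 1 by omega,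
      show 2 * (a + 1) = 2 * a + 2 by ring] at h
    rw [h]
    field_simp
    push_cast
    ring
  · -- the potential `L_{(M)c}Q^c` is constant: it vanishes, or `M = 2ℓ` and it equals `s₀`
    obtain ⟨c, hc⟩ : ∃ c, dotQ (L M 1) Q = fun _ => c := by
      by_cases hMℓ : M = 2 * ℓ
      · exact ⟨s₀, funext (hMℓ ▸ hs₀)⟩
      · exact ⟨0, by rw [hL0 M 1 (by omega), dotQ_zero]⟩
    simp [hc, pd_const, hL0 (M + 1) 2 (by omega), hL0 (M + 1 + 1) 1 (by omega)]

theorem sum_formEval_withPotentials_even {ν ℓ : ℕ}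
    (hL0 : ∀ N r, r = 0 ∨ 2 * ν + 1 < r ∨ 2 * ℓ < N ∨ N % 2 = r % 2 → L N r = fun _ _ => 0)
    (t : ℝ) (q v : Vec D) (a : ℕ) :
    ∑ r ∈ Finset.range (2 * (ν + 1)), t ^ (2 * a) * Tens.formEval (withPotentials L Q (2 * a) r) q v
      = ∑ j ∈ Finset.range (ν + 1), t ^ (2 * a) * Tens.formEval (L (2 * a) (2 * j + 1)) q v := by
  rw [Finset.sum_range_two_mul]
  refine Finset.sum_congr rfl fun j _ => ?_
  have hK : Tens.formEval (withPotentials L Q (2 * a) (2 * j)) q v = 0 := by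
    rcases j with _ | j
    · rcases a with _ | a
      · simp [Tens.formEval_zero]
      · simp [Tens.formEval_rank_zero, show 2 * (a + 1) = 2 * a + 1 + 1 by ring,
          hL0 (2 * a + 1) 1 (by omega), dotQ_zero]
    · rw [show 2 * (j + 1) = 2 * j + 1 + 1 by ring, withPotentials_succ,
        hL0 (2 * a) (2 * j + 1 + 1) (by omega), Tens.formEval_zero]
  rw [hK, mul_zero, zero_add, withPotentials_succ]

theorem sum_formEval_withPotentials_odd {ν ℓ : ℕ}
    (hL0 : ∀ N r, r = 0 ∨ 2 * ν + 1 < r ∨ 2 * ℓ < N ∨ N % 2 = r % 2 → L N r = fun _ _ => 0)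
    (t : ℝ) (q v : Vec D) (a : ℕ) :
    ∑ r ∈ Finset.range (2 * (ν + 1)),
        t ^ (2 * a + 1) * Tens.formEval (withPotentials L Q (2 * a + 1) r) q v
      = t ^ (2 * a + 1) * (dotQ (L (2 * a) 1) Q q / ((2 * a + 1 : ℕ) : ℝ))
        + ∑ j ∈ Finset.range ν,
            t ^ (2 * a + 1) * Tens.formEval (L (2 * a + 1) (2 * j + 2)) q v := by
  have heven : ∀ j, Tens.formEval (withPotentials L Q (2 * a + 1) (2 * (j + 1))) q v
      = Tens.formEval (L (2 * a + 1) (2 * j + 2)) q v := fun j => by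
    rw [show 2 * (j + 1) = 2 * j + 1 + 1 by ring, withPotentials_succ]
  have hodd : ∀ j, Tens.formEval (L (2 * a + 1) (2 * j + 1)) q v = 0 := fun j => by
    rw [hL0 _ _ (by omega), Tens.formEval_zero]
  rw [Finset.sum_range_two_mul, Finset.sum_add_distrib, Finset.sum_range_succ']
  simp only [withPotentials_succ, hodd, mul_zero, Finset.sum_const_zero, add_zero, heven,
    Nat.mul_zero, Tens.formEval_rank_zero, withPotentials_succ_zero]
  push_cast
  ring

theorem sum_formEval_withPotentials {ν ℓ : ℕ} {s₀ : ℝ}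
    (hL0 : ∀ N r, r = 0 ∨ 2 * ν + 1 < r ∨ 2 * ℓ < N ∨ N % 2 = r % 2 → L N r = fun _ _ => 0)
    (hs₀ : ∀ q, dotQ (L (2 * ℓ) 1) Q q = s₀) (t : ℝ) (q v : Vec D) :
    ∑ N ∈ Finset.range (2 * (ℓ + 1)), ∑ r ∈ Finset.range (2 * (ν + 1)),
        t ^ N * Tens.formEval (withPotentials L Q N r) q v
      = (∑ j ∈ Finset.range (ν + 1), ∑ idx : Fin (2 * j + 1) → Fin D,
        (∑ N ∈ Finset.range (ℓ + 1), t ^ (2 * N) * L (2 * N) (2 * j + 1) q idx) *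
          ∏ k : Fin (2 * j + 1), v (idx k))
      + (∑ j ∈ Finset.range ν, ∑ idx : Fin (2 * j + 2) → Fin D,
        (∑ N ∈ Finset.Icc 1 ℓ, t ^ (2 * N - 1) * L (2 * N - 1) (2 * j + 2) q idx) *
          ∏ k : Fin (2 * j + 2), v (idx k))
      + s₀ * t ^ (2 * ℓ + 1) / ((2 * ℓ + 1 : ℕ) : ℝ)
      + (∑ N ∈ Finset.range ℓ,
          dotQ (L (2 * N) 1) Q q * t ^ (2 * N + 1) / ((2 * N + 1 : ℕ) : ℝ)) := by
  have hA : ∑ j ∈ Finset.range (ν + 1), ∑ idx : Fin (2 * j + 1) → Fin D,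
      (∑ N ∈ Finset.range (ℓ + 1), t ^ (2 * N) * L (2 * N) (2 * j + 1) q idx) *
        ∏ k : Fin (2 * j + 1), v (idx k)
      = ∑ a ∈ Finset.range (ℓ + 1), ∑ j ∈ Finset.range (ν + 1),
          t ^ (2 * a) * Tens.formEval (L (2 * a) (2 * j + 1)) q v := by
    simp only [Tens.sum_mul_prod_eq_sum_formEval]
    exact Finset.sum_comm
  have hB : ∑ j ∈ Finset.range ν, ∑ idx : Fin (2 * j + 2) → Fin D,
      (∑ N ∈ Finset.Icc 1 ℓ, t ^ (2 * N - 1) * L (2 * N - 1) (2 * j + 2) q idx) *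
        ∏ k : Fin (2 * j + 2), v (idx k)
      = ∑ a ∈ Finset.range (ℓ + 1), ∑ j ∈ Finset.range ν,
          t ^ (2 * a + 1) * Tens.formEval (L (2 * a + 1) (2 * j + 2)) q v := by
    have hIcc : ∀ f : ℕ → ℝ, ∑ N ∈ Finset.Icc 1 ℓ, f N = ∑ a ∈ Finset.range ℓ, f (a + 1) :=
      fun f => by rw [Finset.range_eq_Ico, Finset.sum_Ico_add' f 0 ℓ 1]; rfl
    simp only [Tens.sum_mul_prod_eq_sum_formEval, hIcc, show ∀ a, 2 * (a + 1) - 1 = 2 * a + 1 by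
      intro a; omega]
    rw [Finset.sum_comm, Finset.sum_range_succ]
    simp [hL0 (2 * ℓ + 1) _ (Or.inr (Or.inr (Or.inl (by omega)))), Tens.formEval_zero]
  have hC : s₀ * t ^ (2 * ℓ + 1) / ((2 * ℓ + 1 : ℕ) : ℝ)
      + ∑ N ∈ Finset.range ℓ, dotQ (L (2 * N) 1) Q q * t ^ (2 * N + 1) / ((2 * N + 1 : ℕ) : ℝ)
      = ∑ a ∈ Finset.range (ℓ + 1),
          t ^ (2 * a + 1) * (dotQ (L (2 * a) 1) Q q / ((2 * a + 1 : ℕ) : ℝ)) := by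
    rw [Finset.sum_range_succ, hs₀, add_comm]
    congr 1
    · exact Finset.sum_congr rfl fun a _ => by ring
    · ring
  rw [hA, hB, add_assoc, hC, Finset.sum_range_two_mul]
  simp only [sum_formEval_withPotentials_even hL0, sum_formEval_withPotentials_odd hL0,
    Finset.sum_add_distrib]
  ring

end withPotentials

/-- `L N r` represents `L_{(N)i₁...i_r}`; components outside the admissible pairs `(N, r)` vanish,
which encodes the "present only if" conventions. -/
theorem stmt10_general {D : ℕ} (ν ℓ : ℕ)
    (Γ : Conn D) (Q : Vec D → Fin D → ℝ)
    (hQ : ∀ a, ContDiff ℝ (⊤ : ℕ∞) fun q => Q q a)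
    (L : ℕ → (r : ℕ) → Tens D r) (s₀ : ℝ)
    (hLsm : ∀ N r, SmoothTens (L N r))
    (hLsym : ∀ N r, IsSymTens (L N r))
    (hL0 : ∀ N r, r = 0 ∨ 2 * ν + 1 < r ∨ 2 * ℓ < N ∨ N % 2 = r % 2 →
      L N r = fun _ _ => 0)
    -- (i) `L_{(0)i₁...i_{2ν+1}}` is a (2ν+1)-th order generalized KT, and for
    -- `ℓ > 0`, `N = 1,…,ℓ`:
    -- `L_{(2N)i₁...i_{2ν+1}} = −(1/(2N)) L_{(2N−1)(i₁...i_{2ν}|i_{2ν+1})}` are (2ν+1)-th order KTs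
    (hKT0 : IsGenKT Γ (L 0 (2 * ν + 1)))
    (hrec : ∀ N, 1 ≤ N → N ≤ ℓ →
      (∀ q (idx : Fin (2 * ν + 1) → Fin D),
        L (2 * N) (2 * ν + 1) q idx =
          -(1 / (2 * (N : ℝ))) * symT (covTens Γ (L (2 * N - 1) (2 * ν))) q idx) ∧
      IsGenKT Γ (L (2 * N) (2 * ν + 1)))
    -- (ii) `s₀ = L_{(2ℓ)a}Q^a` is a constant
    (hs₀ : ∀ q, dotQ (L (2 * ℓ) 1) Q q = s₀)
    -- (iii) for `ℓ > 0`, `N = 1,…,ℓ`: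
    -- `(L_{(2N−2)c}Q^c)_{,i₁} = 2(2N−1) L_{(2N−1)i₁i₂}Q^{i₂} − 2N(2N−1) L_{(2N)i₁}`
    (hc1 : ∀ N, 1 ≤ N → N ≤ ℓ → ∀ q (i : Fin D),
      pd i (dotQ (L (2 * N - 2) 1) Q) q =
        2 * (2 * (N : ℝ) - 1) * (∑ j, L (2 * N - 1) 2 q ![i, j] * Q q j)
          - 2 * (N : ℝ) * (2 * (N : ℝ) - 1) * L (2 * N) 1 q fun _ => i)
    -- (iv) for even ranks `r = 2i+2 ∈ {2,…,2ν}` and `N = 0,…,ℓ`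
    -- (the last term present only if `N < ℓ`)
    (hc2 : ∀ N, N ≤ ℓ → ∀ i : ℕ, 2 * i + 2 ≤ 2 * ν →
      ∀ q (idx : Fin (2 * i + 2) → Fin D),
        symT (covTens Γ (L (2 * N) (2 * i + 1))) q idx =
          ((2 * i + 3 : ℕ) : ℝ) * (∑ j, L (2 * N) (2 * i + 3) q (Fin.snoc idx j) * Q q j)
            - (2 * (N : ℝ) + 1) * L (2 * N + 1) (2 * i + 2) q idx)
    -- (v) for odd ranks `r = 2i+3 ∈ {3,…,2ν−1}` and `N = 1,…,ℓ`
    (hc3 : ∀ N, 1 ≤ N → N ≤ ℓ → ∀ i : ℕ, 2 * i + 4 ≤ 2 * ν →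
      ∀ q (idx : Fin (2 * i + 3) → Fin D),
        symT (covTens Γ (L (2 * N - 1) (2 * i + 2))) q idx =
          ((2 * i + 4 : ℕ) : ℝ) * (∑ j, L (2 * N - 1) (2 * i + 4) q (Fin.snoc idx j) * Q q j)
            - 2 * (N : ℝ) * L (2 * N) (2 * i + 3) q idx) :
    FirstIntegral Γ Q (fun t q v =>
      (∑ j ∈ Finset.range (ν + 1), ∑ idx : Fin (2 * j + 1) → Fin D,
        (∑ N ∈ Finset.range (ℓ + 1), t ^ (2 * N) * L (2 * N) (2 * j + 1) q idx) *
          ∏ k : Fin (2 * j + 1), v (idx k))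
      + (∑ j ∈ Finset.range ν, ∑ idx : Fin (2 * j + 2) → Fin D,
        (∑ N ∈ Finset.Icc 1 ℓ, t ^ (2 * N - 1) * L (2 * N - 1) (2 * j + 2) q idx) *
          ∏ k : Fin (2 * j + 2), v (idx k))
      + s₀ * t ^ (2 * ℓ + 1) / ((2 * ℓ + 1 : ℕ) : ℝ)
      + (∑ N ∈ Finset.range ℓ,
          dotQ (L (2 * N) 1) Q q * t ^ (2 * N + 1) / ((2 * N + 1 : ℕ) : ℝ))) := by
  have hJ := Tens.firstIntegral_of_chain (n := 2 * (ℓ + 1)) (R := 2 * (ν + 1)) Γ Q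
    (withPotentials L Q) (differentiable_withPotentials hLsm hQ) (isSymTens_withPotentials hLsym)
    (withPotentials_eq_zero hL0)
    (fun N r q idx => by
      rcases r with _ | s
      · simpa using symT_covTens_withPotentials_zero hL0 hs₀ hc1 Γ N q idx
      · simp only [withPotentials_succ]
        exact (symT_covTens_eq_chain_succ hL0 hKT0 hrec hc2 hc3 N s q idx).trans
          (by push_cast; ring))
    contractLast_withPotentials_one
  convert hJ using 1
  funext t q v
  exact (sum_formEval_withPotentials hL0 hs₀ t q v).symm

/-- complete form `J^{(2ν+1,2)}_ℓ`, odd order `m = 2ν+1`.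
`L N r` represents `L_{(N)i₁...i_r}`.  The admissible components are
`L_{(2N)}` at odd ranks `r ∈ {1,…,2ν+1}` with `0 ≤ N ≤ ℓ` and `L_{(2N−1)}`
at even ranks `r ∈ {2,…,2ν}` with `1 ≤ N ≤ ℓ`; all other components are absent,
i.e. vanish, which encodes the "present only if" conventions. -/
theorem stmt10 {D : ℕ} (ν ℓ : ℕ) (hν : 1 ≤ ν)
    (Γ : Conn D) (Q : Vec D → Fin D → ℝ)
    (hΓsym : ∀ q a b c, Γ q a b c = Γ q a c b)
    (hΓ : ∀ a b c, ContDiff ℝ (⊤ : ℕ∞) fun q => Γ q a b c)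
    (hQ : ∀ a, ContDiff ℝ (⊤ : ℕ∞) fun q => Q q a)
    (L : ℕ → (r : ℕ) → Tens D r) (s₀ : ℝ)
    (hLsm : ∀ N r, SmoothTens (L N r))
    (hLsym : ∀ N r, IsSymTens (L N r))
    (hL0 : ∀ N r, r = 0 ∨ 2 * ν + 1 < r ∨ 2 * ℓ < N ∨ N % 2 = r % 2 →
      L N r = fun _ _ => 0)
    -- (i) `L_{(0)i₁...i_{2ν+1}}` is a (2ν+1)-th order generalized KT, and for
    -- `ℓ > 0`, `N = 1,…,ℓ`:
    -- `L_{(2N)i₁...i_{2ν+1}} = −(1/(2N)) L_{(2N−1)(i₁...i_{2ν}|i_{2ν+1})}` are (2ν+1)-th order KTs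
    (hKT0 : IsGenKT Γ (L 0 (2 * ν + 1)))
    (hrec : ∀ N, 1 ≤ N → N ≤ ℓ →
      (∀ q (idx : Fin (2 * ν + 1) → Fin D),
        L (2 * N) (2 * ν + 1) q idx =
          -(1 / (2 * (N : ℝ))) * symT (covTens Γ (L (2 * N - 1) (2 * ν))) q idx) ∧
      IsGenKT Γ (L (2 * N) (2 * ν + 1)))
    -- (ii) `s₀ = L_{(2ℓ)a}Q^a` is a constant
    (hs₀ : ∀ q, dotQ (L (2 * ℓ) 1) Q q = s₀)
    -- (iii) for `ℓ > 0`, `N = 1,…,ℓ`: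
    -- `(L_{(2N−2)c}Q^c)_{,i₁} = 2(2N−1) L_{(2N−1)i₁i₂}Q^{i₂} − 2N(2N−1) L_{(2N)i₁}`
    (hc1 : ∀ N, 1 ≤ N → N ≤ ℓ → ∀ q (i : Fin D),
      pd i (dotQ (L (2 * N - 2) 1) Q) q =
        2 * (2 * (N : ℝ) - 1) * (∑ j, L (2 * N - 1) 2 q ![i, j] * Q q j)
          - 2 * (N : ℝ) * (2 * (N : ℝ) - 1) * L (2 * N) 1 q fun _ => i)
    -- (iv) for even ranks `r = 2i+2 ∈ {2,…,2ν}` and `N = 0,…,ℓ`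
    -- (the last term present only if `N < ℓ`)
    (hc2 : ∀ N, N ≤ ℓ → ∀ i : ℕ, 2 * i + 2 ≤ 2 * ν →
      ∀ q (idx : Fin (2 * i + 2) → Fin D),
        symT (covTens Γ (L (2 * N) (2 * i + 1))) q idx =
          ((2 * i + 3 : ℕ) : ℝ) * (∑ j, L (2 * N) (2 * i + 3) q (Fin.snoc idx j) * Q q j)
            - (2 * (N : ℝ) + 1) * L (2 * N + 1) (2 * i + 2) q idx)
    -- (v) for odd ranks `r = 2i+3 ∈ {3,…,2ν−1}` and `N = 1,…,ℓ`
    (hc3 : ∀ N, 1 ≤ N → N ≤ ℓ → ∀ i : ℕ, 2 * i + 4 ≤ 2 * ν →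
      ∀ q (idx : Fin (2 * i + 3) → Fin D),
        symT (covTens Γ (L (2 * N - 1) (2 * i + 2))) q idx =
          ((2 * i + 4 : ℕ) : ℝ) * (∑ j, L (2 * N - 1) (2 * i + 4) q (Fin.snoc idx j) * Q q j)
            - 2 * (N : ℝ) * L (2 * N) (2 * i + 3) q idx) :
    FirstIntegral Γ Q (fun t q v =>
      (∑ j ∈ Finset.range (ν + 1), ∑ idx : Fin (2 * j + 1) → Fin D,
        (∑ N ∈ Finset.range (ℓ + 1), t ^ (2 * N) * L (2 * N) (2 * j + 1) q idx) *
          ∏ k : Fin (2 * j + 1), v (idx k))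
      + (∑ j ∈ Finset.range ν, ∑ idx : Fin (2 * j + 2) → Fin D,
        (∑ N ∈ Finset.Icc 1 ℓ, t ^ (2 * N - 1) * L (2 * N - 1) (2 * j + 2) q idx) *
          ∏ k : Fin (2 * j + 2), v (idx k))
      + s₀ * t ^ (2 * ℓ + 1) / ((2 * ℓ + 1 : ℕ) : ℝ)
      + (∑ N ∈ Finset.range ℓ,
          dotQ (L (2 * N) 1) Q q * t ^ (2 * N + 1) / ((2 * N + 1 : ℕ) : ℝ))) :=
  stmt10_general ν ℓ Γ Q hQ L s₀ hLsm hLsym hL0 hKT0 hrec hs₀ hc1 hc2 hc3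
end
end

section
/- Let k, p be nonzero real constants and let U = {(x,y) ∈ ℝ² : (ky+px)(py−kx) ≠ 0}. Consider the symmetric connection on U whose only nonzero coefficients are Γ¹₁₁ = p/(ky+px) and Γ²₂₂ = p/(py−kx). Then: (a) the vector field L_a = (ky+px, py−kx) is a generalized Killing vector of this connection, i.e. L_{1,x} − L₁Γ¹₁₁ = 0, L_{2,y} − L₂Γ²₂₂ = 0, and L_{1,y} + L_{2,x} = 0 on U; (b) ∂Γ¹₁₁/∂y = −kp/(ky+px)² and ∂Γ²₂₂/∂x = kp/(py−kx)² are nowhere equal on U, so the connection is non-Riemannian. -/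
noncomputable section
open scoped BigOperators

/-- Partial derivative `∂f/∂x` on `ℝ²`. -/
def pdx (f : ℝ × ℝ → ℝ) (z : ℝ × ℝ) : ℝ := fderiv ℝ f z (1, 0)

/-- Partial derivative `∂f/∂y` on `ℝ²`. -/
def pdy (f : ℝ × ℝ → ℝ) (z : ℝ × ℝ) : ℝ := fderiv ℝ f z (0, 1)

/-- Partial derivative `∂f/∂q^c` on `ℝ²`, `c : Fin 2`. -/
def pd2 (c : Fin 2) (f : ℝ × ℝ → ℝ) (z : ℝ × ℝ) : ℝ :=
  if c = 0 then pdx f z else pdy f z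

/-- The symmetric connection on `ℝ²` whose only (possibly) nonzero
coefficients are `Γ¹₁₁ = G1` and `Γ²₂₂ = G2`. -/
def conn2 (G1 G2 : ℝ × ℝ → ℝ) (z : ℝ × ℝ) (a b c : Fin 2) : ℝ :=
  if a = 0 ∧ b = 0 ∧ c = 0 then G1 z
  else if a = 1 ∧ b = 1 ∧ c = 1 then G2 z else 0

/-- `γ_{ab}` is covariantly constant on `U` with respect to `conn2 G1 G2`:
`γ_{ab,c} − γ_{db}Γ^d_{ac} − γ_{ad}Γ^d_{bc} = 0`. -/
def CovConstOn (G1 G2 : ℝ × ℝ → ℝ) (γ : ℝ × ℝ → Fin 2 → Fin 2 → ℝ)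
    (U : Set (ℝ × ℝ)) : Prop :=
  ∀ z ∈ U, ∀ a b c : Fin 2,
    pd2 c (fun w => γ w a b) z
      - (∑ d, γ z d b * conn2 G1 G2 z d a c)
      - (∑ d, γ z a d * conn2 G1 G2 z d b c) = 0

/-- `γ_{ab}` is a kinetic metric on `U` for the connection `conn2 G1 G2`:
a smooth symmetric covariantly constant matrix field with nonzero determinant.
The connection is *Riemannian* on `U` iff such a `γ` exists. -/
def IsKineticMetricOn (G1 G2 : ℝ × ℝ → ℝ) (γ : ℝ × ℝ → Fin 2 → Fin 2 → ℝ)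
    (U : Set (ℝ × ℝ)) : Prop :=
  (∀ a b, ContDiffOn ℝ (⊤ : ℕ∞) (fun z => γ z a b) U) ∧
  (∀ z a b, γ z a b = γ z b a) ∧
  CovConstOn G1 G2 γ U ∧
  ∀ z ∈ U, γ z 0 0 * γ z 1 1 - γ z 0 1 * γ z 1 0 ≠ 0

/-! Covariant constancy of `γ` is a first-order system for its entries:
`∂ₓγ₀₀ = 2Γ¹₁₁γ₀₀`, `∂ᵧγ₀₀ = 0`, `∂ₓγ₀₁ = Γ¹₁₁γ₀₁`, `∂ᵧγ₀₁ = Γ²₂₂γ₀₁`, `∂ₓγ₁₁ = 0`,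
`∂ᵧγ₁₁ = 2Γ²₂₂γ₁₁`. Symmetry of second derivatives yields the compatibility conditions
`γ₀₁ (∂ᵧΓ¹₁₁ - ∂ₓΓ²₂₂) = 0`, `γ₀₀ ∂ᵧΓ¹₁₁ = 0` and `γ₁₁ ∂ₓΓ²₂₂ = 0`. Where
`∂ᵧΓ¹₁₁ ≠ ∂ₓΓ²₂₂`, the first forces `γ₀₁ = 0`, so `γ₀₀ γ₁₁ ≠ 0` and both derivatives vanish,
a contradiction. For the connection at hand the two derivatives `∓kp/(…)²` have opposite signs.
-/

open Filter Topology

section PartialDerivatives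

variable {f g : ℝ × ℝ → ℝ} {z : ℝ × ℝ}

theorem fderiv_fderiv_apply_comm (hf : ContDiffAt ℝ 2 f z) (u v : ℝ × ℝ) :
    fderiv ℝ (fun w => fderiv ℝ f w u) z v = fderiv ℝ (fun w => fderiv ℝ f w v) z u := by
  have hdf : DifferentiableAt ℝ (fderiv ℝ f) z :=
    (hf.fderiv_right (m := 1) (by norm_num)).differentiableAt (by norm_num)
  simp only [fderiv_clm_apply hdf (differentiableAt_const _)]
  simpa using (hf.isSymmSndFDerivAt (by simp)) v u

theorem pdx_pdy_comm (hf : ContDiffAt ℝ 2 f z) : pdx (pdy f) z = pdy (pdx f) z :=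
  fderiv_fderiv_apply_comm hf _ _

theorem Filter.EventuallyEq.pdx_eq (h : f =ᶠ[𝓝 z] g) : pdx f z = pdx g z := by
  rw [pdx, h.fderiv_eq, pdx]

theorem Filter.EventuallyEq.pdy_eq (h : f =ᶠ[𝓝 z] g) : pdy f z = pdy g z := by
  rw [pdy, h.fderiv_eq, pdy]

theorem pdx_mul (hf : DifferentiableAt ℝ f z) (hg : DifferentiableAt ℝ g z) :
    pdx (fun w => f w * g w) z = pdx f z * g z + f z * pdx g z := by
  simp only [pdx, fderiv_fun_mul hf hg]
  simp only [add_apply, smul_apply, smul_eq_mul]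
  ring

theorem pdy_mul (hf : DifferentiableAt ℝ f z) (hg : DifferentiableAt ℝ g z) :
    pdy (fun w => f w * g w) z = pdy f z * g z + f z * pdy g z := by
  simp only [pdy, fderiv_fun_mul hf hg]
  simp only [add_apply, smul_apply, smul_eq_mul]
  ring

theorem pdx_const (c : ℝ) : pdx (fun _ => c) z = 0 := by
  simp [pdx]

theorem pdy_const (c : ℝ) : pdy (fun _ => c) z = 0 := by
  simp [pdy]

theorem pdx_const_mul (c : ℝ) (hf : DifferentiableAt ℝ f z) :
    pdx (fun w => c * f w) z = c * pdx f z := by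
  simp [pdx, fderiv_const_mul hf]

theorem pdy_const_mul (c : ℝ) (hf : DifferentiableAt ℝ f z) :
    pdy (fun w => c * f w) z = c * pdy f z := by
  simp [pdy, fderiv_const_mul hf]

theorem pdx_const_div (c : ℝ) (hf : DifferentiableAt ℝ f z) (hz : f z ≠ 0) :
    pdx (fun w => c / f w) z = -(c * pdx f z) / f z ^ 2 := by
  have h := ((hasDerivAt_inv hz).const_mul c).comp_hasFDerivAt z hf.hasFDerivAt
  simp only [Function.comp_def, ← div_eq_mul_inv] at h
  simp only [pdx, h.fderiv, smul_apply, smul_eq_mul]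
  ring

theorem pdy_const_div (c : ℝ) (hf : DifferentiableAt ℝ f z) (hz : f z ≠ 0) :
    pdy (fun w => c / f w) z = -(c * pdy f z) / f z ^ 2 := by
  have h := ((hasDerivAt_inv hz).const_mul c).comp_hasFDerivAt z hf.hasFDerivAt
  simp only [Function.comp_def, ← div_eq_mul_inv] at h
  simp only [pdy, h.fderiv, smul_apply, smul_eq_mul]
  ring

theorem mul_pdy_sub_pdx_eq_zero {a b : ℝ × ℝ → ℝ} (hf : ContDiffAt ℝ 2 f z)
    (ha : DifferentiableAt ℝ a z) (hb : DifferentiableAt ℝ b z)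
    (hx : pdx f =ᶠ[𝓝 z] fun w => f w * a w) (hy : pdy f =ᶠ[𝓝 z] fun w => f w * b w) :
    f z * (pdy a z - pdx b z) = 0 := by
  have hdf : DifferentiableAt ℝ f z := hf.differentiableAt (by norm_num)
  have hmixed := pdx_pdy_comm hf
  rw [hy.pdx_eq, hx.pdy_eq, pdx_mul hdf hb, pdy_mul hdf ha, hx.self_of_nhds,
    hy.self_of_nhds] at hmixed
  linear_combination -hmixed

end PartialDerivatives

section KineticMetric

variable {G1 G2 : ℝ × ℝ → ℝ} {γ : ℝ × ℝ → Fin 2 → Fin 2 → ℝ} {U : Set (ℝ × ℝ)} {z : ℝ × ℝ}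

namespace CovConstOn

theorem pdx_apply_zero_zero (h : CovConstOn G1 G2 γ U) (hz : z ∈ U) :
    pdx (fun w => γ w 0 0) z = γ z 0 0 * (2 * G1 z) := by
  simpa [pd2, conn2, sub_sub, sub_eq_zero, ← mul_add, two_mul] using h z hz 0 0 0

theorem pdy_apply_zero_zero (h : CovConstOn G1 G2 γ U) (hz : z ∈ U) :
    pdy (fun w => γ w 0 0) z = 0 := by
  simpa [pd2, conn2] using h z hz 0 0 1

theorem pdx_apply_zero_one (h : CovConstOn G1 G2 γ U) (hz : z ∈ U) :
    pdx (fun w => γ w 0 1) z = γ z 0 1 * G1 z := by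
  simpa [pd2, conn2, sub_eq_zero] using h z hz 0 1 0

theorem pdy_apply_zero_one (h : CovConstOn G1 G2 γ U) (hz : z ∈ U) :
    pdy (fun w => γ w 0 1) z = γ z 0 1 * G2 z := by
  simpa [pd2, conn2, sub_eq_zero] using h z hz 0 1 1

theorem pdx_apply_one_one (h : CovConstOn G1 G2 γ U) (hz : z ∈ U) :
    pdx (fun w => γ w 1 1) z = 0 := by
  simpa [pd2, conn2] using h z hz 1 1 0

theorem pdy_apply_one_one (h : CovConstOn G1 G2 γ U) (hz : z ∈ U) :
    pdy (fun w => γ w 1 1) z = γ z 1 1 * (2 * G2 z) := by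
  simpa [pd2, conn2, sub_sub, sub_eq_zero, ← mul_add, two_mul] using h z hz 1 1 1

end CovConstOn

theorem IsKineticMetricOn.pdy_eq_pdx (hU : IsOpen U) (hγ : IsKineticMetricOn G1 G2 γ U)
    (hz : z ∈ U) (hG1 : DifferentiableAt ℝ G1 z) (hG2 : DifferentiableAt ℝ G2 z) :
    pdy G1 z = pdx G2 z := by
  obtain ⟨hsmooth, -, hcov, hdet⟩ := hγ
  have hC2 (a b : Fin 2) : ContDiffAt ℝ 2 (fun w => γ w a b) z :=
    ((hsmooth a b).contDiffAt (hU.mem_nhds hz)).of_le (WithTop.coe_le_coe.2 le_top)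
  have near {P : ℝ × ℝ → Prop} (hP : ∀ w ∈ U, P w) : ∀ᶠ w in 𝓝 z, P w :=
    eventually_of_mem (hU.mem_nhds hz) hP
  have h00 := mul_pdy_sub_pdx_eq_zero (hC2 0 0) (hG1.const_mul 2) (differentiableAt_const 0)
    (near fun w hw => hcov.pdx_apply_zero_zero hw)
    (near fun w hw => (hcov.pdy_apply_zero_zero hw).trans (mul_zero _).symm)
  have h11 := mul_pdy_sub_pdx_eq_zero (hC2 1 1) (differentiableAt_const 0) (hG2.const_mul 2)
    (near fun w hw => (hcov.pdx_apply_one_one hw).trans (mul_zero _).symm)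
    (near fun w hw => hcov.pdy_apply_one_one hw)
  have h01 := mul_pdy_sub_pdx_eq_zero (hC2 0 1) hG1 hG2
    (near fun w hw => hcov.pdx_apply_zero_one hw) (near fun w hw => hcov.pdy_apply_zero_one hw)
  rw [pdy_const_mul 2 hG1, pdx_const] at h00
  rw [pdx_const_mul 2 hG2, pdy_const] at h11
  by_contra hne
  have hγ01 : γ z 0 1 = 0 := (mul_eq_zero.1 h01).resolve_right (sub_ne_zero.2 hne)
  have hdiag : γ z 0 0 * γ z 1 1 ≠ 0 := by simpa [hγ01] using hdet z hz
  have hG1y : pdy G1 z = 0 := by simpa [left_ne_zero_of_mul hdiag] using h00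
  have hG2x : pdx G2 z = 0 := by simpa [right_ne_zero_of_mul hdiag] using h11
  exact hne (by linarith)

theorem not_exists_isKineticMetricOn (hU : IsOpen U) (hz : z ∈ U)
    (hG1 : DifferentiableAt ℝ G1 z) (hG2 : DifferentiableAt ℝ G2 z) (hne : pdy G1 z ≠ pdx G2 z) :
    ¬ ∃ γ, IsKineticMetricOn G1 G2 γ U :=
  fun ⟨_, hγ⟩ => hne (hγ.pdy_eq_pdx hU hz hG1 hG2)

end KineticMetric

section LinearForms

variable (a b : ℝ) (z : ℝ × ℝ)

theorem pdx_mul_snd_add_mul_fst : pdx (fun w => a * w.2 + b * w.1) z = b := by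
  simp (disch := fun_prop) [pdx, fderiv_fun_add, fderiv_const_mul, fderiv_fst, fderiv_snd]

theorem pdy_mul_snd_add_mul_fst : pdy (fun w => a * w.2 + b * w.1) z = a := by
  simp (disch := fun_prop) [pdy, fderiv_fun_add, fderiv_const_mul, fderiv_fst, fderiv_snd]

theorem pdx_mul_snd_sub_mul_fst : pdx (fun w => a * w.2 - b * w.1) z = -b := by
  simp (disch := fun_prop) [pdx, fderiv_fun_sub, fderiv_const_mul, fderiv_fst, fderiv_snd]

theorem pdy_mul_snd_sub_mul_fst : pdy (fun w => a * w.2 - b * w.1) z = a := by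
  simp (disch := fun_prop) [pdy, fderiv_fun_sub, fderiv_const_mul, fderiv_fst, fderiv_snd]

end LinearForms

theorem neg_div_sq_ne_div_sq {a b c : ℝ} (hc : c ≠ 0) (ha : a ≠ 0) (hb : b ≠ 0) :
    -c / a ^ 2 ≠ c / b ^ 2 := by
  intro h
  field_simp at h
  linarith [sq_pos_of_ne_zero ha, sq_nonneg b]

/-- On `U = {(x,y) : (ky+px)(py−kx) ≠ 0}` with
`Γ¹₁₁ = p/(ky+px)`, `Γ²₂₂ = p/(py−kx)`:
(a) `L = (ky+px, py−kx)` is a generalized Killing vector of the connection;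
(b) `∂Γ¹₁₁/∂y = −kp/(ky+px)²` and `∂Γ²₂₂/∂x = kp/(py−kx)²` are nowhere equal
on `U`, so the connection is non-Riemannian (no kinetic metric exists). -/
theorem stmt15 (k p : ℝ) (hk : k ≠ 0) (hp : p ≠ 0) :
    -- (a) the generalized Killing vector equations
    (∀ z ∈ {w : ℝ × ℝ | (k * w.2 + p * w.1) * (p * w.2 - k * w.1) ≠ 0},
      pdx (fun w => k * w.2 + p * w.1) z
          - (k * z.2 + p * z.1) * (p / (k * z.2 + p * z.1)) = 0 ∧
      pdy (fun w => p * w.2 - k * w.1) z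
          - (p * z.2 - k * z.1) * (p / (p * z.2 - k * z.1)) = 0 ∧
      pdy (fun w => k * w.2 + p * w.1) z + pdx (fun w => p * w.2 - k * w.1) z = 0) ∧
    -- (b) the two derivatives, and their nowhere-equality on U
    (∀ z ∈ {w : ℝ × ℝ | (k * w.2 + p * w.1) * (p * w.2 - k * w.1) ≠ 0},
      pdy (fun w => p / (k * w.2 + p * w.1)) z = -(k * p) / (k * z.2 + p * z.1) ^ 2 ∧
      pdx (fun w => p / (p * w.2 - k * w.1)) z = k * p / (p * z.2 - k * z.1) ^ 2 ∧
      pdy (fun w => p / (k * w.2 + p * w.1)) z ≠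
        pdx (fun w => p / (p * w.2 - k * w.1)) z) ∧
    -- hence the connection is non-Riemannian
    ¬ ∃ γ : ℝ × ℝ → Fin 2 → Fin 2 → ℝ,
      IsKineticMetricOn (fun w => p / (k * w.2 + p * w.1))
        (fun w => p / (p * w.2 - k * w.1)) γ
        {w : ℝ × ℝ | (k * w.2 + p * w.1) * (p * w.2 - k * w.1) ≠ 0} := by
  set U := {w : ℝ × ℝ | (k * w.2 + p * w.1) * (p * w.2 - k * w.1) ≠ 0}
  have hderiv (z : ℝ × ℝ) (hz : z ∈ U) :
      pdy (fun w => p / (k * w.2 + p * w.1)) z = -(k * p) / (k * z.2 + p * z.1) ^ 2 ∧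
      pdx (fun w => p / (p * w.2 - k * w.1)) z = k * p / (p * z.2 - k * z.1) ^ 2 ∧
      pdy (fun w => p / (k * w.2 + p * w.1)) z ≠
        pdx (fun w => p / (p * w.2 - k * w.1)) z := by
    obtain ⟨hA, hB⟩ := mul_ne_zero_iff.1 hz
    have hG1 : pdy (fun w => p / (k * w.2 + p * w.1)) z = -(k * p) / (k * z.2 + p * z.1) ^ 2 := by
      rw [pdy_const_div p (by fun_prop) hA, pdy_mul_snd_add_mul_fst, mul_comm p k]
    have hG2 : pdx (fun w => p / (p * w.2 - k * w.1)) z = k * p / (p * z.2 - k * z.1) ^ 2 := by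
      rw [pdx_const_div p (by fun_prop) hB, pdx_mul_snd_sub_mul_fst, mul_neg, neg_neg, mul_comm p k]
    exact ⟨hG1, hG2, hG1 ▸ hG2 ▸ neg_div_sq_ne_div_sq (mul_ne_zero hk hp) hA hB⟩
  refine ⟨fun z hz => ?_, hderiv, ?_⟩
  · obtain ⟨hA, hB⟩ := mul_ne_zero_iff.1 hz
    rw [pdx_mul_snd_add_mul_fst, pdy_mul_snd_sub_mul_fst, pdy_mul_snd_add_mul_fst,
      pdx_mul_snd_sub_mul_fst, mul_div_cancel₀ p hA, mul_div_cancel₀ p hB]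
    exact ⟨sub_self p, sub_self p, add_neg_cancel k⟩
  · have h10 : ((1 : ℝ), (0 : ℝ)) ∈ U := by simp [U, hk, hp]
    obtain ⟨hA, hB⟩ := mul_ne_zero_iff.1 h10
    exact not_exists_isKineticMetricOn (isOpen_ne_fun (by fun_prop) continuous_const) h10
      (by fun_prop (disch := exact hA)) (by fun_prop (disch := exact hB)) (hderiv _ h10).2.2
end
end
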